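/- Let μ be a probability measure on a measurable space Ω, and let M, E₁, E₂ be measurable sets with 0 < μ(M) < 1, μ(E₁) > 0, μ(E₂) > 0. Assume μ[E₁ ∩ E₂ | M] = μ[E₁ | M] · μ[E₂ | M] and μ[E₁ ∩ E₂ | Mᶜ] = μ[E₁ | Mᶜ] · μ[E₂ | Mᶜ], and that 0 < μ[M | E₁] < 1 and 0 < μ[M | E₂] < 1. Define the odds function o(x) = x / (1 − x). Then μ(E₁ ∩ E₂) > 0, 0 < μ[M | E₁ ∩ E₂] < 1, and o(μ[M | E₁ ∩ E₂]) = o(μ[M | E₁]) · o(μ[M | E₂]) / o(μ(M)). -/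
import Mathlib


open MeasureTheory

/-- Conditional probability `μ[A | B] = μ(A ∩ B) / μ(B)`, as a real number. -/
noncomputable def condProb {Ω : Type*} [MeasurableSpace Ω] (μ : Measure Ω)
    (A B : Set Ω) : ℝ :=
  (μ (A ∩ B)).toReal / (μ B).toReal

/-- The odds of a probability `x`: `o(x) = x / (1 - x)`. -/
noncomputable def odds (x : ℝ) : ℝ := x / (1 - x)

private lemma split_toReal {Ω : Type*} [MeasurableSpace Ω] (μ : Measure Ω)
    [IsProbabilityMeasure μ] (s M : Set Ω) (hMm : MeasurableSet M) :
    (μ (s ∩ M)).toReal + (μ (s ∩ Mᶜ)).toReal = (μ s).toReal := by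
  rw [← ENNReal.toReal_add (measure_ne_top μ _) (measure_ne_top μ _)]
  congr 1
  rw [← Set.diff_eq]
  exact measure_inter_add_diff s hMm

private lemma odds_div (x y : ℝ) (hy : y ≠ 0) : odds (x / y) = x / (y - x) := by
  rcases eq_or_ne (y - x) 0 with h | h
  · have hxy : x = y := by linarith [sub_eq_zero.mp h]
    simp [odds, hxy, div_self hy, h]
  · unfold odds
    rw [one_sub_div hy]
    field_simp

/-- Odds form of the fused posterior (Eq. (17) of the Noisy-AND derivation). -/
theorem noisy_and_odds_form {Ω : Type*} [MeasurableSpace Ω]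
    (μ : Measure Ω) [IsProbabilityMeasure μ]
    (M E₁ E₂ : Set Ω)
    (hMm : MeasurableSet M) (hE₁m : MeasurableSet E₁) (hE₂m : MeasurableSet E₂)
    (hM0 : 0 < μ M) (hM1 : μ M < 1)
    (hE₁0 : 0 < μ E₁) (hE₂0 : 0 < μ E₂)
    (hCI : condProb μ (E₁ ∩ E₂) M = condProb μ E₁ M * condProb μ E₂ M)
    (hCIc : condProb μ (E₁ ∩ E₂) Mᶜ = condProb μ E₁ Mᶜ * condProb μ E₂ Mᶜ)
    (hp₁0 : 0 < condProb μ M E₁) (hp₁1 : condProb μ M E₁ < 1)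
    (hp₂0 : 0 < condProb μ M E₂) (hp₂1 : condProb μ M E₂ < 1) :
    0 < μ (E₁ ∩ E₂) ∧
    (0 < condProb μ M (E₁ ∩ E₂) ∧ condProb μ M (E₁ ∩ E₂) < 1) ∧
    odds (condProb μ M (E₁ ∩ E₂)) =
      odds (condProb μ M E₁) * odds (condProb μ M E₂) / odds ((μ M).toReal) := by
  set m : ℝ := (μ M).toReal with hm_def
  have hm0 : 0 < m := ENNReal.toReal_pos hM0.ne' (measure_ne_top μ M)
  have hm1 : m < 1 := by
    have h := (ENNReal.toReal_lt_toReal (measure_ne_top μ M)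
      ENNReal.one_ne_top).mpr hM1
    simpa [hm_def] using h
  have hmc : (μ Mᶜ).toReal = 1 - m := by
    rw [prob_compl_eq_one_sub hMm, ENNReal.toReal_sub_of_le hM1.le (by simp)]
    simp [hm_def]
  set a₁ : ℝ := (μ (E₁ ∩ M)).toReal with ha₁_def
  set a₂ : ℝ := (μ (E₂ ∩ M)).toReal with ha₂_def
  set b₁ : ℝ := (μ (E₁ ∩ Mᶜ)).toReal with hb₁_def
  set b₂ : ℝ := (μ (E₂ ∩ Mᶜ)).toReal with hb₂_def
  set a : ℝ := (μ (E₁ ∩ E₂ ∩ M)).toReal with ha_def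
  set b : ℝ := (μ (E₁ ∩ E₂ ∩ Mᶜ)).toReal with hb_def
  set e₁ : ℝ := (μ E₁).toReal with he₁_def
  set e₂ : ℝ := (μ E₂).toReal with he₂_def
  have he₁0 : 0 < e₁ := ENNReal.toReal_pos hE₁0.ne' (measure_ne_top μ E₁)
  have he₂0 : 0 < e₂ := ENNReal.toReal_pos hE₂0.ne' (measure_ne_top μ E₂)
  have hs₁ : a₁ + b₁ = e₁ := split_toReal μ E₁ M hMm
  have hs₂ : a₂ + b₂ = e₂ := split_toReal μ E₂ M hMm
  have hsE : a + b = (μ (E₁ ∩ E₂)).toReal := split_toReal μ (E₁ ∩ E₂) M hMm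
  have hcp₁ : condProb μ M E₁ = a₁ / e₁ := by rw [condProb, Set.inter_comm]
  have hcp₂ : condProb μ M E₂ = a₂ / e₂ := by rw [condProb, Set.inter_comm]
  have ha₁0 : 0 < a₁ := by
    have h := mul_pos (hcp₁ ▸ hp₁0) he₁0
    rwa [div_mul_cancel₀ _ he₁0.ne'] at h
  have ha₂0 : 0 < a₂ := by
    have h := mul_pos (hcp₂ ▸ hp₂0) he₂0
    rwa [div_mul_cancel₀ _ he₂0.ne'] at h
  have hb₁0 : 0 < b₁ := by
    have h := (div_lt_one he₁0).mp (hcp₁ ▸ hp₁1)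
    linarith
  have hb₂0 : 0 < b₂ := by
    have h := (div_lt_one he₂0).mp (hcp₂ ▸ hp₂1)
    linarith
  have h1m : (0:ℝ) < 1 - m := by linarith
  have ha : a * m = a₁ * a₂ := by
    have h := hCI
    rw [condProb, condProb, condProb] at h
    rw [← ha_def, ← ha₁_def, ← ha₂_def, ← hm_def, div_mul_div_comm] at h
    have key := (div_eq_div_iff hm0.ne' (by positivity : (0:ℝ) < m * m).ne').mp h
    exact mul_right_cancel₀ hm0.ne' (by linear_combination key)
  have hb : b * (1 - m) = b₁ * b₂ := by
    have h := hCIc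
    rw [condProb, condProb, condProb, hmc] at h
    rw [← hb_def, ← hb₁_def, ← hb₂_def, div_mul_div_comm] at h
    have key := (div_eq_div_iff h1m.ne'
      (by positivity : (0:ℝ) < (1 - m) * (1 - m)).ne').mp h
    exact mul_right_cancel₀ h1m.ne' (by linear_combination key)
  have ha0 : 0 < a := by nlinarith
  have hb0 : 0 < b := by nlinarith
  have hE0 : 0 < μ (E₁ ∩ E₂) := by
    rw [pos_iff_ne_zero]
    intro h
    rw [h] at hsE
    simp at hsE
    linarith
  have hcp : condProb μ M (E₁ ∩ E₂) = a / (a + b) := by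
    rw [condProb, Set.inter_comm, ← hsE]
  refine ⟨hE0, ⟨?_, ?_⟩, ?_⟩
  · rw [hcp]; positivity
  · rw [hcp, div_lt_one (by linarith)]; linarith
  · rw [hcp, hcp₁, hcp₂]
    rw [odds_div a (a + b) (by linarith), odds_div a₁ e₁ he₁0.ne',
      odds_div a₂ e₂ he₂0.ne']
    have hom : odds m = m / (1 - m) := rfl
    rw [hom]
    have h1 : a + b - a = b := by ring
    have h2 : e₁ - a₁ = b₁ := by linarith
    have h3 : e₂ - a₂ = b₂ := by linarith
    rw [h1, h2, h3]
    field_simp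
    linear_combination (b₁ * b₂) * ha - (a₁ * a₂) * hb
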